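/- arXiv:2411.04710 — 2 statements merged into one kernel-verified Lean document; each statement's English description precedes it below -/
import Mathlib

section
/- (Differential privacy of the Laplace mechanism.) Let f be a numeric query mapping datasets to ℝ^d with finite ℓ₁ global sensitivity Δf > 0, and let ε > 0. The Laplace mechanism M_Lap(D) = f(D) + Z, where Z ∈ ℝ^d is a vector of d i.i.d. samples from the Laplace distribution Lap(Δf/ε), is (ε,0)-differentially private. -/
open MeasureTheory ENNReal

/-- Two datasets (finite multisets over a universe `U`) are adjacent under the
add/remove notion if their symmetric difference has cardinality 1. -/
def Adjacent {U : Type*} [DecidableEq U] (D D' : Multiset U) : Prop :=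
  Multiset.card ((D - D') + (D' - D)) = 1

/-- Pure `(ε,0)`-differential privacy. -/
def PureDP {U : Type*} [DecidableEq U] {R : Type*} [MeasurableSpace R]
    (M : Multiset U → Measure R) (ε : ℝ) : Prop :=
  ∀ S : Set R, MeasurableSet S → ∀ D D' : Multiset U, Adjacent D D' →
    M D S ≤ ENNReal.ofReal (Real.exp ε) * M D' S

/-- The Laplace distribution with mean 0 and scale `b`. -/
noncomputable def Lap (b : ℝ) : Measure ℝ :=
  volume.withDensity fun x => ENNReal.ofReal ((1 / (2 * b)) * Real.exp (-|x| / b))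

/-- The Laplace mechanism: output `f(D) + Z` where `Z ∈ ℝ^d` is a vector of `d`
i.i.d. samples from `Lap(Δf/ε)`. -/
noncomputable def LaplaceMechanism {U : Type*} (d : ℕ) (f : Multiset U → (Fin d → ℝ))
    (Δf ε : ℝ) (D : Multiset U) : Measure (Fin d → ℝ) :=
  (Measure.pi fun _ : Fin d => Lap (Δf / ε)).map fun z => f D + z

/-!
On input `D` the mechanism's output has Lebesgue density `x ↦ ∏ᵢ p(xᵢ - f(D)ᵢ)`, where
`p(t) = exp(-|t|/b) / (2b)` is the Laplace density of scale `b = Δf/ε`. The triangle inequality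
gives `p(t) ≤ exp(|t - s|/b) p(s)`, so for adjacent `D, D'` the two densities differ pointwise by a
factor at most `exp(‖f D - f D'‖₁ / b) ≤ exp(Δf / b) = exp ε`; integrating over `S` gives the claim.
-/

theorem lintegral_fin_prod_eq_prod {α : Type*} [MeasurableSpace α] {n : ℕ}
    {μ : Fin n → Measure α} [∀ i, SigmaFinite (μ i)]
    {f : Fin n → α → ℝ≥0∞} (hf : ∀ i, Measurable (f i)) :
    ∫⁻ x, ∏ i, f i (x i) ∂(Measure.pi μ) = ∏ i, ∫⁻ x, f i x ∂(μ i) := by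
  induction n with
  | zero => simp
  | succ n ih =>
      calc
        _ = ∫⁻ x : α × (Fin n → α), f 0 x.1 * ∏ i : Fin n, f i.succ (x.2 i)
            ∂((μ 0).prod (Measure.pi fun i ↦ μ i.succ)) := by
          rw [← ((measurePreserving_piFinSuccAbove μ 0).symm).lintegral_comp_emb
            (MeasurableEquiv.measurableEmbedding _)]
          simp [Fin.prod_univ_succ, Fin.insertNthEquiv]
        _ = (∫⁻ x, f 0 x ∂μ 0) * ∏ i : Fin n, ∫⁻ x, f i.succ x ∂(μ i.succ) := by
          have hrest : Measurable fun x : Fin n → α ↦ ∏ i, f i.succ (x i) :=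
            Finset.measurable_prod _ fun i _ ↦ (hf i.succ).comp (measurable_pi_apply i)
          rw [← ih fun i ↦ hf i.succ, ← lintegral_prod_mul (hf 0).aemeasurable hrest.aemeasurable]
        _ = ∏ i, ∫⁻ x, f i x ∂(μ i) := (Fin.prod_univ_succ (fun i ↦ ∫⁻ x, f i x ∂(μ i))).symm

theorem lintegral_fintype_prod_eq_prod {ι α : Type*} [Fintype ι] [MeasurableSpace α]
    {μ : ι → Measure α} [∀ i, SigmaFinite (μ i)]
    {f : ι → α → ℝ≥0∞} (hf : ∀ i, Measurable (f i)) :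
    ∫⁻ x, ∏ i, f i (x i) ∂(Measure.pi μ) = ∏ i, ∫⁻ x, f i x ∂(μ i) := by
  let e := (Fintype.equivFin ι).symm
  rw [← (measurePreserving_piCongrLeft _ e).lintegral_comp_emb
    (MeasurableEquiv.measurableEmbedding _)]
  simp_rw [← e.prod_comp, MeasurableEquiv.coe_piCongrLeft, Equiv.piCongrLeft_apply_apply]
  exact lintegral_fin_prod_eq_prod fun i ↦ hf (e i)

theorem pi_withDensity {ι α : Type*} [Fintype ι] [MeasurableSpace α]
    {μ : ι → Measure α} [∀ i, SigmaFinite (μ i)]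
    {f : ι → α → ℝ≥0∞} (hf : ∀ i, Measurable (f i)) (hf_ne_top : ∀ i, ∀ᵐ x ∂μ i, f i x ≠ ∞) :
    Measure.pi (fun i ↦ (μ i).withDensity (f i)) =
      (Measure.pi μ).withDensity fun x ↦ ∏ i, f i (x i) := by
  have (i : ι) : SigmaFinite ((μ i).withDensity (f i)) := .withDensity_of_ne_top (hf_ne_top i)
  refine Measure.pi_eq (μ := fun i ↦ (μ i).withDensity (f i)) fun s hs ↦ ?_
  have hbox : (Set.univ.pi s).indicator (fun x ↦ ∏ i, f i (x i)) =
      fun x ↦ ∏ i, (s i).indicator (f i) (x i) := by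
    ext x
    classical
    simp [Set.indicator_apply, Finset.prod_ite_zero]
  rw [withDensity_apply _ (.univ_pi hs), ← lintegral_indicator (.univ_pi hs), hbox,
    lintegral_fintype_prod_eq_prod fun i ↦ (hf i).indicator (hs i)]
  simp_rw [lintegral_indicator (hs _), withDensity_apply _ (hs _)]

theorem map_add_left_withDensity {G : Type*} [MeasurableSpace G] [AddCommGroup G]
    [MeasurableAdd G] [MeasurableNeg G] {μ : Measure G} [μ.IsAddLeftInvariant]
    {ρ : G → ℝ≥0∞} (hρ : Measurable ρ) (a : G) :
    (μ.withDensity ρ).map (a + ·) = μ.withDensity fun x ↦ ρ (x - a) := by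
  ext S hS
  rw [Measure.map_apply (measurable_const_add a) hS,
    withDensity_apply _ (hS.preimage (measurable_const_add a)), withDensity_apply _ hS]
  conv_rhs => rw [← map_add_left_eq_self μ a]
  rw [setLIntegral_map (f := fun x ↦ ρ (x - a)) hS (hρ.comp (measurable_sub_const a))
    (measurable_const_add a)]
  simp

noncomputable def laplacePDF (b x : ℝ) : ℝ :=
  1 / (2 * b) * Real.exp (-|x| / b)

theorem Lap_eq_withDensity (b : ℝ) :
    Lap b = volume.withDensity fun x ↦ ENNReal.ofReal (laplacePDF b x) :=
  rfl

@[fun_prop]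
theorem measurable_laplacePDF (b : ℝ) : Measurable (laplacePDF b) := by
  unfold laplacePDF
  fun_prop

theorem laplacePDF_le_exp_mul_laplacePDF {b : ℝ} (hb : 0 < b) (x y : ℝ) :
    laplacePDF b x ≤ Real.exp (|x - y| / b) * laplacePDF b y := by
  have htri : |y| ≤ |x - y| + |x| := by
    simpa [abs_sub_comm] using abs_sub_le y x 0
  rw [laplacePDF, laplacePDF, mul_left_comm, ← Real.exp_add]
  gcongr
  rw [← add_div, div_le_div_iff_of_pos_right hb]
  linarith

theorem map_add_pi_Lap_eq_withDensity {ι : Type*} [Fintype ι] (b : ℝ) (a : ι → ℝ) :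
    (Measure.pi fun _ : ι ↦ Lap b).map (a + ·) =
      volume.withDensity fun x ↦ ∏ i, ENNReal.ofReal (laplacePDF b (x i - a i)) := by
  rw [Lap_eq_withDensity, pi_withDensity (fun _ ↦ by fun_prop)
      (fun _ ↦ ae_of_all _ fun _ ↦ ofReal_ne_top), ← volume_pi,
    map_add_left_withDensity (by fun_prop)]
  rfl

theorem map_add_pi_Lap_le_smul {ι : Type*} [Fintype ι] {b : ℝ} (hb : 0 < b) (a a' : ι → ℝ) :
    (Measure.pi fun _ : ι ↦ Lap b).map (a + ·) ≤
      ENNReal.ofReal (Real.exp ((∑ i, |a i - a' i|) / b)) •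
        (Measure.pi fun _ : ι ↦ Lap b).map (a' + ·) := by
  rw [map_add_pi_Lap_eq_withDensity, map_add_pi_Lap_eq_withDensity,
    ← withDensity_smul _ (by fun_prop)]
  refine withDensity_mono (ae_of_all _ fun x ↦ ?_)
  calc ∏ i, ENNReal.ofReal (laplacePDF b (x i - a i))
      ≤ ∏ i, (ENNReal.ofReal (Real.exp (|a i - a' i| / b)) *
          ENNReal.ofReal (laplacePDF b (x i - a' i))) := by
        refine Finset.prod_le_prod' fun i _ ↦ ?_
        have h := laplacePDF_le_exp_mul_laplacePDF hb (x i - a i) (x i - a' i)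
        rw [show x i - a i - (x i - a' i) = a' i - a i by ring, abs_sub_comm] at h
        rw [← ofReal_mul (Real.exp_nonneg _)]
        exact ofReal_le_ofReal h
    _ = _ := by
        rw [Finset.prod_mul_distrib, ← ofReal_prod_of_nonneg fun _ _ ↦ (Real.exp_nonneg _),
          ← Real.exp_sum, Finset.sum_div]
        rfl

/-- **Differential privacy of the Laplace mechanism.** If `f : D → ℝ^d` has ℓ₁
global sensitivity at most `Δf > 0` and `ε > 0`, then the Laplace mechanism with
scale `Δf/ε` is `(ε,0)`-differentially private. -/
theorem laplace_mechanism_dp {U : Type*} [DecidableEq U] (d : ℕ)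
    (f : Multiset U → (Fin d → ℝ)) (Δf ε : ℝ) (hΔ : 0 < Δf) (hε : 0 < ε)
    (hsens : ∀ D D' : Multiset U, Adjacent D D' → ∑ i, |f D i - f D' i| ≤ Δf) :
    PureDP (LaplaceMechanism d f Δf ε) ε := by
  intro S _ D D' hadj
  have hb : 0 < Δf / ε := div_pos hΔ hε
  have hratio : (∑ i, |f D i - f D' i|) / (Δf / ε) ≤ ε :=
    calc (∑ i, |f D i - f D' i|) / (Δf / ε) ≤ Δf / (Δf / ε) := by
          gcongr
          exact hsens D D' hadj
      _ = ε := by field_simp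
  calc LaplaceMechanism d f Δf ε D S
      ≤ ENNReal.ofReal (Real.exp ((∑ i, |f D i - f D' i|) / (Δf / ε))) *
          LaplaceMechanism d f Δf ε D' S := map_add_pi_Lap_le_smul hb (f D) (f D') S
    _ ≤ ENNReal.ofReal (Real.exp ε) * LaplaceMechanism d f Δf ε D' S := by gcongr
end

section
/- (Accuracy of the Laplace mechanism.) Let f be a numeric query mapping datasets to ℝ^d with finite ℓ₁ global sensitivity Δf > 0, let ε > 0, and let M_Lap(D) = f(D) + Z with Z a vector of d i.i.d. Lap(Δf/ε) samples. Then for every dataset D and every β ∈ (0,1): P[ ‖f(D) − M_Lap(D)‖_∞ ≥ ln(d/β) · (Δf/ε) ] ≤ β. -/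
/-!
Write `b = Δf / ε`. By symmetry of the Laplace density and the exponential integral on
`[t, ∞)`, each noise coordinate satisfies `P[|Z_i| ≥ t] ≤ exp (-t / b)`. The sup-norm of `Z`
reaches `t > 0` only if some coordinate does, so a union bound gives `d · exp (-t / b)`, which
equals `β` at `t = ln (d / β) · b`.
-/

open MeasureTheory ENNReal

section
variable {b : ℝ}

lemma Lap_neg (s : Set ℝ) : Lap b (-s) = Lap b s := by
  rw [Lap, withDensity_apply', withDensity_apply', ← Set.neg_preimage,
    ← (Measure.measurePreserving_neg volume).setLIntegral_comp_preimage_emb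
      (MeasurableEquiv.neg ℝ).measurableEmbedding _ s]
  simp only [abs_neg]

lemma Lap_Ici (hb : 0 < b) {t : ℝ} (ht : 0 ≤ t) :
    Lap b (Set.Ici t) = ENNReal.ofReal (Real.exp (-t / b) / 2) := by
  have hdens : Set.EqOn (fun x => (1 / (2 * b)) * Real.exp (-|x| / b))
      (fun x => (1 / (2 * b)) * Real.exp (-b⁻¹ * x)) (Set.Ioi t) := fun x hx => by
    simp only [abs_of_pos (ht.trans_lt hx), neg_mul, div_eq_inv_mul, mul_neg]
  rw [Lap, withDensity_apply _ measurableSet_Ici, Measure.restrict_congr_set Ioi_ae_eq_Ici.symm,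
    setLIntegral_congr_fun measurableSet_Ioi fun x hx => congrArg ENNReal.ofReal (hdens hx),
    ← ofReal_integral_eq_lintegral_ofReal
      ((integrableOn_exp_mul_Ioi (neg_lt_zero.2 (inv_pos.2 hb)) t).const_mul _)
      (Filter.Eventually.of_forall fun x => by positivity),
    integral_const_mul, integral_exp_mul_Ioi (neg_lt_zero.2 (inv_pos.2 hb))]
  congr 1
  field_simp

lemma isProbabilityMeasure_Lap (hb : 0 < b) : IsProbabilityMeasure (Lap b) := by
  have hIoi : Lap b (Set.Ioi 0) = Lap b (Set.Ici 0) :=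
    measure_congr ((withDensity_absolutelyContinuous _ _).ae_eq Ioi_ae_eq_Ici)
  have hIic : Lap b (Set.Iic 0) = Lap b (Set.Ici 0) := by
    simpa only [Set.neg_Ici, neg_zero] using Lap_neg (b := b) (Set.Ici 0)
  constructor
  rw [← Set.Iic_union_Ioi (a := (0 : ℝ)), measure_union (Set.Iic_disjoint_Ioi le_rfl)
    measurableSet_Ioi, hIic, hIoi, Lap_Ici hb le_rfl,
    ← ofReal_add (by positivity) (by positivity), add_halves]
  simp

lemma Lap_setOf_le_abs_le (hb : 0 < b) {t : ℝ} (ht : 0 ≤ t) :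
    Lap b {x | t ≤ |x|} ≤ ENNReal.ofReal (Real.exp (-t / b)) := by
  have hsplit : {x : ℝ | t ≤ |x|} = -Set.Ici t ∪ Set.Ici t := by
    ext x
    simp only [Set.mem_ofPred_eq, Set.mem_union, Set.mem_neg, Set.mem_Ici, le_abs, le_neg]
    tauto
  calc Lap b {x | t ≤ |x|} ≤ Lap b (-Set.Ici t) + Lap b (Set.Ici t) :=
        hsplit ▸ measure_union_le _ _
    _ = ENNReal.ofReal (Real.exp (-t / b)) := by
        rw [Lap_neg, Lap_Ici hb ht, ← ofReal_add (by positivity) (by positivity), add_halves]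

end

lemma Measure.pi_setOf_le_norm_le_sum {ι E : Type*} [Fintype ι] [SeminormedAddGroup E]
    [MeasurableSpace E] [OpensMeasurableSpace E] (μ : ι → Measure E)
    [∀ i, IsProbabilityMeasure (μ i)] {t : ℝ} (ht : 0 < t) :
    Measure.pi μ {z | t ≤ ‖z‖} ≤ ∑ i, μ i {x | t ≤ ‖x‖} := by
  have hcover : {z : ι → E | t ≤ ‖z‖} ⊆ ⋃ i, Function.eval i ⁻¹' {x | t ≤ ‖x‖} := by
    intro z hz
    by_contra hz'
    simp only [Set.mem_iUnion, Set.mem_preimage, Set.mem_ofPred_eq, not_exists, not_le] at hz'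
    exact ((pi_norm_lt_iff ht).2 hz').not_ge hz
  calc Measure.pi μ {z | t ≤ ‖z‖}
      ≤ ∑ i, Measure.pi μ (Function.eval i ⁻¹' {x | t ≤ ‖x‖}) :=
        (measure_mono hcover).trans (measure_iUnion_fintype_le _ _)
    _ = ∑ i, μ i {x | t ≤ ‖x‖} := Finset.sum_congr rfl fun i _ =>
        (measurePreserving_eval μ i).measure_preimage
          (isClosed_le continuous_const continuous_norm).measurableSet.nullMeasurableSet

lemma LaplaceMechanism_setOf_le_norm_sub {U : Type*} (d : ℕ) (f : Multiset U → (Fin d → ℝ))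
    (Δf ε : ℝ) (D : Multiset U) (t : ℝ) :
    LaplaceMechanism d f Δf ε D {x | t ≤ ‖f D - x‖} =
      Measure.pi (fun _ : Fin d => Lap (Δf / ε)) {z | t ≤ ‖z‖} := by
  rw [LaplaceMechanism, Measure.map_apply (measurable_const_add _)
    (isClosed_le continuous_const (by fun_prop)).measurableSet]
  congr 1
  ext z
  simp only [Set.mem_preimage, Set.mem_ofPred_eq, sub_add_cancel_left, norm_neg]

theorem laplace_mechanism_accuracy_general {U : Type*} (d : ℕ) (hd : 0 < d)
    (f : Multiset U → (Fin d → ℝ)) (Δf ε : ℝ) (hΔ : 0 < Δf) (hε : 0 < ε)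
    (D : Multiset U) (β : ℝ) (hβ : β ∈ Set.Ioo (0 : ℝ) 1) :
    LaplaceMechanism d f Δf ε D
        {x : Fin d → ℝ | Real.log ((d : ℝ) / β) * (Δf / ε) ≤ ‖f D - x‖} ≤
      ENNReal.ofReal β := by
  obtain ⟨hβ0, hβ1⟩ := hβ
  set b := Δf / ε
  have hb : 0 < b := div_pos hΔ hε
  have := isProbabilityMeasure_Lap hb
  set t := Real.log ((d : ℝ) / β) * b
  have hdβ : 1 < (d : ℝ) / β := (one_lt_div hβ0).2 (hβ1.trans_le (by exact_mod_cast hd))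
  have ht : 0 < t := mul_pos (Real.log_pos hdβ) hb
  have hexp : Real.exp (-t / b) = β / d := by
    rw [neg_div, mul_div_cancel_right₀ _ hb.ne', Real.exp_neg, Real.exp_log (by positivity),
      inv_div]
  calc LaplaceMechanism d f Δf ε D {x | t ≤ ‖f D - x‖}
      = Measure.pi (fun _ : Fin d => Lap b) {z | t ≤ ‖z‖} :=
        LaplaceMechanism_setOf_le_norm_sub d f Δf ε D t
    _ ≤ ∑ _i : Fin d, Lap b {x | t ≤ ‖x‖} := Measure.pi_setOf_le_norm_le_sum _ ht
    _ ≤ ∑ _i : Fin d, ENNReal.ofReal (β / d) := Finset.sum_le_sum fun _ _ => by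
        simpa only [Real.norm_eq_abs, hexp] using Lap_setOf_le_abs_le hb ht.le
    _ = ENNReal.ofReal β := by
        rw [Finset.sum_const, Finset.card_univ, Fintype.card_fin, nsmul_eq_mul,
          ← ofReal_natCast, ← ofReal_mul (by positivity), mul_div_cancel₀ _ (by positivity)]

/-- **Accuracy of the Laplace mechanism.** For every dataset `D` and every
`β ∈ (0,1)`, `P[ ‖f(D) − M_Lap(D)‖_∞ ≥ ln(d/β)·(Δf/ε) ] ≤ β`.  Here the sup-norm
`‖·‖` on `Fin d → ℝ` is the maximal absolute value of the coordinates. -/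
theorem laplace_mechanism_accuracy {U : Type*} [DecidableEq U] (d : ℕ) (hd : 0 < d)
    (f : Multiset U → (Fin d → ℝ)) (Δf ε : ℝ) (hΔ : 0 < Δf) (hε : 0 < ε)
    (hsens : ∀ D D' : Multiset U, Adjacent D D' → ∑ i, |f D i - f D' i| ≤ Δf)
    (D : Multiset U) (β : ℝ) (hβ : β ∈ Set.Ioo (0 : ℝ) 1) :
    LaplaceMechanism d f Δf ε D
        {x : Fin d → ℝ | Real.log ((d : ℝ) / β) * (Δf / ε) ≤ ‖f D - x‖} ≤
      ENNReal.ofReal β :=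
  laplace_mechanism_accuracy_general d hd f Δf ε hΔ hε D β hβ
end
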